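/- Let R be a commutative Bézout domain of stable range 1.5, m ∈ R neither zero nor a unit, and R_m = R/mR. Let n ≥ 2 and Φ = diag(φ₁, …, φ_n) over R_m with φ₁ ∣ φ₂ ∣ ⋯ ∣ φ_n and φ_n ≠ 0. If H is an invertible n×n matrix over R_m belonging to the Zelisko group G_Φ (i.e., H·Φ = Φ·S for some invertible matrix S over R_m), then for all i > j, every generating solution ψ of the equation φ_i = φ_j·x in R_m divides the (i, j) entry of H. -/

import Mathlib

/-- A commutative ring has stable range 1.5. -/
def HasStableRange15 (R : Type*) [CommRing R] : Prop :=
  ∀ a b c : R, c ≠ 0 → (∀ d : R, d ∣ a → d ∣ b → d ∣ c → IsUnit d) →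
    ∃ r : R, ∀ d : R, d ∣ a + b * r → d ∣ c → IsUnit d

def IsGeneratingSolution {R : Type*} [CommRing R] (a b ψ : R) : Prop :=
  b = a * ψ ∧ ∀ x, b = a * x → ψ ∣ x

theorem IsGeneratingSolution.dvd_of_mul_eq_mul {R : Type*} [CommRing R] {a b ψ h s : R}
    (hψ : IsGeneratingSolution a b ψ) (hhs : h * a = b * s) : ψ ∣ h := by
  obtain ⟨hsol, hgen⟩ := hψ
  -- `h - ψ * s` annihilates `a`, so shifting `ψ` by it gives another solution.
  have hshift : b = a * (ψ + (h - ψ * s)) := by linear_combination (1 - s) * hsol - hhs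
  have hdiff : ψ ∣ h - ψ * s := (dvd_add_right dvd_rfl).mp (hgen _ hshift)
  simpa using dvd_add hdiff (dvd_mul_right ψ s)

theorem Matrix.apply_mul_eq_mul_apply_of_mul_diagonal_eq {ι R : Type*} [Fintype ι]
    [DecidableEq ι] [CommSemiring R] {φ : ι → R} {H S : Matrix ι ι R}
    (hHS : H * Matrix.diagonal φ = Matrix.diagonal φ * S) (i j : ι) :
    H i j * φ j = φ i * S i j := by
  simpa [Matrix.mul_diagonal, Matrix.diagonal_mul] using congrFun (congrFun hHS i) j

/-- If `H` belongs to the Zelisko group of `Φ = diag(φ₁, …, φ_n)` (with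
`φ₁ ∣ ⋯ ∣ φ_n ≠ 0`), then for `i > j` every generating solution of `φ_i = φ_j * x`
divides the `(i, j)` entry of `H`. -/
theorem zelisko_mem_entries_divisible
    {R : Type*} [CommRing R]
    (m : R)
    (n : ℕ)
    (φ : Fin n → R ⧸ Ideal.span {m})
    (H : Matrix (Fin n) (Fin n) (R ⧸ Ideal.span {m}))
    (S : Matrix (Fin n) (Fin n) (R ⧸ Ideal.span {m}))
    (hHS : H * Matrix.diagonal φ = Matrix.diagonal φ * S) :
    ∀ i j : Fin n, j < i →
      ∀ ψ : R ⧸ Ideal.span {m}, φ i = φ j * ψ →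
        (∀ x : R ⧸ Ideal.span {m}, φ i = φ j * x → ψ ∣ x) →
        ψ ∣ H i j := by
  intro i j _ ψ hψ hgen
  exact IsGeneratingSolution.dvd_of_mul_eq_mul ⟨hψ, hgen⟩
    (Matrix.apply_mul_eq_mul_apply_of_mul_diagonal_eq hHS i j)
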